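/- Fix d, L ∈ ℕ, 0 < λ_1 < … < λ_L, a finite set of shifts M ⊆ [−d,d]², and an object x = (x_1, …, x_L) with x_ℓ ∈ ℂ^{[d]²}. With v^ℓ_{m,k} ∈ ℂ^{[d]²} given by (v^ℓ_{m,k})_n = conj((x_ℓ)_{n+m}) 𝟙_Q((n+m)/d) e^{2πi (λ_1/λ_ℓ) k·n/d} and Q^x_{m,k} the block-diagonal matrix with ℓ-th diagonal block λ_ℓ^{−2} v^ℓ_{m,k}(v^ℓ_{m,k})*, the spectral norm satisfies ‖Σ_{m∈M} Σ_{k∈[d]²} Q^x_{m,k}‖ ≤ max_{ℓ=1,…,L} { λ_ℓ^{−2} ‖F_ℓ‖² max_{n∈[d]²} Σ_{m∈M} |(x_ℓ)_{n+m}|² 𝟙_Q((n+m)/d) }, where F_ℓ ∈ ℂ^{[d]²×[d]²} is the matrix with entries (F_ℓ)_{k,n} = e^{−2πi (λ_1/λ_ℓ) k·n/d}. -/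

import Mathlib

open Matrix

/-- Spectral (operator 2-) norm of a square complex matrix. -/
noncomputable def specNorm {n : Type*} [Fintype n] [DecidableEq n] (A : Matrix n n ℂ) : ℝ :=
  ‖Matrix.toEuclideanCLM (𝕜 := ℂ) A‖

/-- Extension of a vector `v ∈ ℂ^{[d]²}` to `ℤ²` by zero: this realizes
`v_p · 𝟙_Q(p/d)`, where `𝟙_Q(p/d) = 1` iff `p ∈ [d]²`. -/
noncomputable def extz (d : ℕ) (v : Fin d × Fin d → ℂ) (p : ℤ × ℤ) : ℂ :=
  if h : 0 ≤ p.1 ∧ p.1 < (d : ℤ) ∧ 0 ≤ p.2 ∧ p.2 < (d : ℤ) then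
    v (⟨p.1.toNat, by omega⟩, ⟨p.2.toNat, by omega⟩)
  else 0

/-- The vector `v^ℓ_{m,k} ∈ ℂ^{[d]²}` with entries
`(v^ℓ_{m,k})_n = conj((x_ℓ)_{n+m}) 𝟙_Q((n+m)/d) e^{2πi (λ₁/λ_ℓ) k·n/d}`. -/
noncomputable def vvec (d L : ℕ) (lam : Fin L → ℝ) (lam1 : ℝ)
    (x : Fin L → Fin d × Fin d → ℂ) (ℓ : Fin L) (m : ℤ × ℤ) (k : Fin d × Fin d) :
    Fin d × Fin d → ℂ := fun n =>
  (starRingEnd ℂ) (extz d (x ℓ) ((n.1 : ℤ) + m.1, (n.2 : ℤ) + m.2)) *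
    Complex.exp (2 * Real.pi * Complex.I * (lam1 / lam ℓ : ℝ) *
      (((k.1 : ℕ) * (n.1 : ℕ) + (k.2 : ℕ) * (n.2 : ℕ) : ℕ)) / (d : ℕ))

/-- The block-diagonal matrix `Q^x_{m,k} ∈ ℂ^{dL×dL}` with `ℓ`-th diagonal
block `λ_ℓ^{−2} v^ℓ_{m,k} (v^ℓ_{m,k})^*`. -/
noncomputable def Qx (d L : ℕ) (lam : Fin L → ℝ) (lam1 : ℝ)
    (x : Fin L → Fin d × Fin d → ℂ) (m : ℤ × ℤ) (k : Fin d × Fin d) :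
    Matrix (Fin L × (Fin d × Fin d)) (Fin L × (Fin d × Fin d)) ℂ :=
  Matrix.of fun p q =>
    if p.1 = q.1 then
      ((lam p.1 : ℂ) ^ 2)⁻¹ * vvec d L lam lam1 x p.1 m k p.2 *
        (starRingEnd ℂ) (vvec d L lam lam1 x p.1 m k q.2)
    else 0

/-- The partial Fourier matrix `F_ℓ` with entries `(F_ℓ)_{k,n} = e^{−2πi (λ₁/λ_ℓ) k·n/d}`. -/
noncomputable def Fmat (d L : ℕ) (lam : Fin L → ℝ) (lam1 : ℝ) (ℓ : Fin L) :
    Matrix (Fin d × Fin d) (Fin d × Fin d) ℂ :=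
  Matrix.of fun k n =>
    Complex.exp (-(2 * Real.pi * Complex.I) * (lam1 / lam ℓ : ℝ) *
      (((k.1 : ℕ) * (n.1 : ℕ) + (k.2 : ℕ) * (n.2 : ℕ) : ℕ)) / (d : ℕ))

open scoped ComplexConjugate

lemma quadQ (d L : ℕ) (lam : Fin L → ℝ) (lam1 : ℝ) (x : Fin L → Fin d × Fin d → ℂ)
    (m : ℤ × ℤ) (k : Fin d × Fin d) (z : Fin L × (Fin d × Fin d) → ℂ) :
    ∑ p : Fin L × (Fin d × Fin d), conj ((Qx d L lam lam1 x m k).mulVec z p) * z p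
      = ∑ ℓ : Fin L, ((lam ℓ : ℂ) ^ 2)⁻¹ *
          Complex.normSq (∑ n : Fin d × Fin d,
            conj (z (ℓ, n)) * vvec d L lam lam1 x ℓ m k n) := by
  rw [Fintype.sum_prod_type]
  refine Finset.sum_congr rfl fun ℓ _ => ?_
  set v := vvec d L lam lam1 x ℓ m k with hv
  have hblock : ∀ n : Fin d × Fin d, (Qx d L lam lam1 x m k).mulVec z (ℓ, n) =
      ((lam ℓ : ℂ) ^ 2)⁻¹ * v n * ∑ n', conj (v n') * z (ℓ, n') := by
    intro n
    simp only [Matrix.mulVec, dotProduct, Qx, Matrix.of_apply, Fintype.sum_prod_type,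
      ite_mul, zero_mul]
    rw [Fintype.sum_eq_single ℓ (fun b hb => by simp [Ne.symm hb])]
    simp [Finset.mul_sum, mul_assoc, hv]
  set B := ∑ n : Fin d × Fin d, conj (v n) * z (ℓ, n) with hB
  have hcb : Complex.normSq (∑ n : Fin d × Fin d, conj (z (ℓ, n)) * v n)
      = Complex.normSq B := by
    rw [show (∑ n : Fin d × Fin d, conj (z (ℓ, n)) * v n) = conj B from by
      rw [hB, map_sum]; exact Finset.sum_congr rfl fun n _ => by simp [mul_comm]]
    rw [Complex.normSq_conj]
  calc ∑ n : Fin d × Fin d, conj ((Qx d L lam lam1 x m k).mulVec z (ℓ, n)) * z (ℓ, n)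
      = ∑ n : Fin d × Fin d,
          ((lam ℓ : ℂ) ^ 2)⁻¹ * ((conj (v n) * z (ℓ, n)) * conj B) := by
        refine Finset.sum_congr rfl fun n _ => ?_
        rw [hblock n, hB]
        simp only [_root_.map_mul, map_inv₀, _root_.map_pow, Complex.conj_ofReal, map_sum, RingHomCompTriple.comp_apply]
        ring_nf
    _ = ((lam ℓ : ℂ) ^ 2)⁻¹ * (B * conj B) := by
        rw [← Finset.mul_sum, ← Finset.sum_mul, ← hB]
    _ = ((lam ℓ : ℂ) ^ 2)⁻¹ * Complex.normSq B := by rw [Complex.mul_conj]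
    _ = _ := by rw [hcb]

lemma inner_toEuclideanCLM {ι : Type*} [Fintype ι] [DecidableEq ι]
    (A : Matrix ι ι ℂ) (z : EuclideanSpace ℂ ι) :
    (inner ℂ (Matrix.toEuclideanCLM (𝕜 := ℂ) A z) z : ℂ)
      = ∑ p, conj (A.mulVec (fun q => z q) p) * z p := by
  rw [PiLp.inner_apply]
  refine Finset.sum_congr rfl fun p _ => ?_
  rw [RCLike.inner_apply']
  rfl

lemma vvec_eq_conj (d L : ℕ) (lam : Fin L → ℝ) (lam1 : ℝ)
    (x : Fin L → Fin d × Fin d → ℂ) (ℓ : Fin L) (m : ℤ × ℤ) (k n : Fin d × Fin d) :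
    vvec d L lam lam1 x ℓ m k n
      = conj (Fmat d L lam lam1 ℓ k n * extz d (x ℓ) ((n.1 : ℤ) + m.1, (n.2 : ℤ) + m.2)) := by
  rw [vvec, Fmat, _root_.map_mul]
  rw [mul_comm]
  congr 1
  rw [Matrix.of_apply, ← Complex.exp_conj]
  congr 1
  simp only [map_div₀, _root_.map_mul, map_neg, Complex.conj_I, Complex.conj_ofReal,
    map_ofNat, Complex.conj_natCast]
  ring

noncomputable def cval (d L : ℕ) (lam : Fin L → ℝ) (lam1 : ℝ)
    (x : Fin L → Fin d × Fin d → ℂ) (z : Fin L × (Fin d × Fin d) → ℂ)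
    (ℓ : Fin L) (m : ℤ × ℤ) (k : Fin d × Fin d) : ℂ :=
  ∑ n : Fin d × Fin d, conj (z (ℓ, n)) * vvec d L lam lam1 x ℓ m k n

lemma cval_eq_conj_mulVec (d L : ℕ) (lam : Fin L → ℝ) (lam1 : ℝ)
    (x : Fin L → Fin d × Fin d → ℂ) (z : Fin L × (Fin d × Fin d) → ℂ)
    (ℓ : Fin L) (m : ℤ × ℤ) (k : Fin d × Fin d) :
    cval d L lam lam1 x z ℓ m k
      = conj ((Fmat d L lam lam1 ℓ).mulVec
          (fun n => extz d (x ℓ) ((n.1 : ℤ) + m.1, (n.2 : ℤ) + m.2) * z (ℓ, n)) k) := by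
  rw [cval, Matrix.mulVec, dotProduct, map_sum]
  refine Finset.sum_congr rfl fun n _ => ?_
  rw [vvec_eq_conj, _root_.map_mul, _root_.map_mul, _root_.map_mul]
  ring
open scoped InnerProductSpace ComplexConjugate

lemma opNorm_le_of_quadratic {E : Type*} [NormedAddCommGroup E] [InnerProductSpace ℂ E]
    [CompleteSpace E] (T : E →L[ℂ] E) (hsa : IsSelfAdjoint T)
    {C : ℝ} (hC : 0 ≤ C)
    (hpos : ∀ z : E, 0 ≤ Complex.re (⟪T z, z⟫_ℂ))
    (h : ∀ z : E, Complex.re (⟪T z, z⟫_ℂ) ≤ C * ‖z‖ ^ 2) :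
    ‖T‖ ≤ C := by
  have hadj : ∀ x y : E, ⟪T x, y⟫_ℂ = ⟪x, T y⟫_ℂ := fun x y => by
    conv_lhs => rw [← hsa.adjoint_eq]
    exact ContinuousLinearMap.adjoint_inner_left _ _ _
  let core : PreInnerProductSpace.Core ℂ E :=
    { inner := fun x y => ⟪T x, y⟫_ℂ
      conj_inner_symm := fun x y => by
        simpa using (inner_conj_symm x (T y)).trans (hadj x y).symm
      re_inner_nonneg := hpos
      add_left := fun x y z => by simp [inner_add_left]
      smul_left := fun x y r => by simp [inner_smul_left]; ring
      }
  refine T.opNorm_le_bound hC fun x => ?_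
  have cs0 := @InnerProductSpace.Core.inner_mul_inner_self_le ℂ E _ _ _ core x (T x)
  have cs : ‖⟪T x, T x⟫_ℂ‖ * ‖⟪T (T x), x⟫_ℂ‖
      ≤ Complex.re ⟪T x, x⟫_ℂ * Complex.re ⟪T (T x), T x⟫_ℂ := cs0
  have h1 : ⟪T (T x), x⟫_ℂ = ⟪T x, T x⟫_ℂ := hadj (T x) x
  have h2 : ‖⟪T x, T x⟫_ℂ‖ = ‖T x‖ ^ 2 := by
    rw [inner_self_eq_norm_sq_to_K]; simp [sq_abs]
  rw [h1, h2] at cs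
  have h3 := h x
  have h4 := h (T x)
  have h5 := hpos x
  have h6 := hpos (T x)
  have key : ‖T x‖ ^ 2 * ‖T x‖ ^ 2 ≤ (C * ‖x‖ ^ 2) * (C * ‖T x‖ ^ 2) := by
    calc ‖T x‖ ^ 2 * ‖T x‖ ^ 2 ≤ Complex.re ⟪T x, x⟫_ℂ * Complex.re ⟪T (T x), T x⟫_ℂ := cs
    _ ≤ (C * ‖x‖ ^ 2) * (C * ‖T x‖ ^ 2) := by
        apply mul_le_mul h3 h4 h6 (by positivity)
  rcases eq_or_lt_of_le (norm_nonneg (T x)) with h0 | h0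
  · rw [← h0]; positivity
  · have h7 : ‖T x‖ ^ 2 ≤ C ^ 2 * ‖x‖ ^ 2 := by
      have hp : (0:ℝ) < ‖T x‖ ^ 2 := by positivity
      nlinarith [key]
    nlinarith [norm_nonneg (T x), norm_nonneg x, mul_nonneg hC (norm_nonneg x)]

lemma mulVec_sq_sum_le {ι : Type*} [Fintype ι] [DecidableEq ι]
    (A : Matrix ι ι ℂ) (w : ι → ℂ) :
    ∑ k, ‖A.mulVec w k‖ ^ 2 ≤ specNorm A ^ 2 * ∑ n, ‖w n‖ ^ 2 := by
  let w' : EuclideanSpace ℂ ι := (WithLp.equiv 2 _).symm w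
  have h2 : ‖Matrix.toEuclideanCLM (𝕜 := ℂ) A w'‖ ≤ specNorm A * ‖w'‖ :=
    (Matrix.toEuclideanCLM (𝕜 := ℂ) A).le_opNorm w'
  have h3 : ‖Matrix.toEuclideanCLM (𝕜 := ℂ) A w'‖ ^ 2 ≤ (specNorm A * ‖w'‖) ^ 2 :=
    pow_le_pow_left₀ (norm_nonneg _) h2 2
  have h4 : ‖Matrix.toEuclideanCLM (𝕜 := ℂ) A w'‖ ^ 2 = ∑ k, ‖A.mulVec w k‖ ^ 2 := by
    rw [show w' = WithLp.toLp 2 w from rfl, Matrix.toEuclideanCLM_toLp, PiLp.norm_sq_eq_of_L2]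
  have h5 : ‖w'‖ ^ 2 = ∑ n, ‖w n‖ ^ 2 := by
    rw [PiLp.norm_sq_eq_of_L2]; rfl
  rw [h4] at h3
  calc ∑ k, ‖A.mulVec w k‖ ^ 2 ≤ (specNorm A * ‖w'‖) ^ 2 := h3
  _ = specNorm A ^ 2 * ∑ n, ‖w n‖ ^ 2 := by rw [mul_pow, h5]

open scoped InnerProductSpace

/-- The spectral–norm bound behind the admissible step size for
window recovery in polychromatic ptychography with known object:
`‖Σ_{m∈M} Σ_{k∈[d]²} Q^x_{m,k}‖ ≤ max_ℓ { λ_ℓ^{−2} ‖F_ℓ‖² max_{n∈[d]²} Σ_{m∈M} |(x_ℓ)_{n+m}|² 𝟙_Q((n+m)/d) }`. -/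
theorem stmt12 (d L : ℕ) (hd : 0 < d) (hL : 0 < L)
    (lam : Fin L → ℝ) (hlam : ∀ ℓ, 0 < lam ℓ) (hmono : StrictMono lam)
    (M : Finset (ℤ × ℤ))
    (hM : ∀ m ∈ M, -(d : ℤ) ≤ m.1 ∧ m.1 ≤ (d : ℤ) ∧ -(d : ℤ) ≤ m.2 ∧ m.2 ≤ (d : ℤ))
    (x : Fin L → Fin d × Fin d → ℂ) :
    specNorm (∑ m ∈ M, ∑ k : Fin d × Fin d, Qx d L lam (lam ⟨0, hL⟩) x m k)
      ≤ Finset.univ.sup' ⟨⟨0, hL⟩, Finset.mem_univ _⟩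
          (fun ℓ : Fin L =>
            ((lam ℓ) ^ 2)⁻¹ * specNorm (Fmat d L lam (lam ⟨0, hL⟩) ℓ) ^ 2 *
              Finset.univ.sup' ⟨(⟨0, hd⟩, ⟨0, hd⟩), Finset.mem_univ _⟩
                (fun n : Fin d × Fin d =>
                  ∑ m ∈ M, ‖extz d (x ℓ) ((n.1 : ℤ) + m.1, (n.2 : ℤ) + m.2)‖ ^ 2)) := by
  classical
  set lam1 : ℝ := lam ⟨0, hL⟩ with hlam1
  set S : Matrix (Fin L × (Fin d × Fin d)) (Fin L × (Fin d × Fin d)) ℂ :=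
    ∑ m ∈ M, ∑ k : Fin d × Fin d, Qx d L lam lam1 x m k with hS
  set Bsup : Fin L → ℝ := fun ℓ =>
    Finset.univ.sup' ⟨(⟨0, hd⟩, ⟨0, hd⟩), Finset.mem_univ _⟩
      (fun n : Fin d × Fin d =>
        ∑ m ∈ M, ‖extz d (x ℓ) ((n.1 : ℤ) + m.1, (n.2 : ℤ) + m.2)‖ ^ 2) with hBsup
  set f : Fin L → ℝ := fun ℓ =>
    ((lam ℓ) ^ 2)⁻¹ * specNorm (Fmat d L lam lam1 ℓ) ^ 2 * Bsup ℓ with hf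
  set C : ℝ := Finset.univ.sup' ⟨⟨0, hL⟩, Finset.mem_univ _⟩ f with hC
  show specNorm S ≤ C
  -- nonnegativity facts
  have hBsup_le : ∀ (ℓ : Fin L) (n : Fin d × Fin d), (∑ m ∈ M, ‖extz d (x ℓ) ((n.1 : ℤ) + m.1, (n.2 : ℤ) + m.2)‖ ^ 2)
      ≤ Bsup ℓ := fun ℓ n =>
    Finset.le_sup' (fun n : Fin d × Fin d =>
      ∑ m ∈ M, ‖extz d (x ℓ) ((n.1 : ℤ) + m.1, (n.2 : ℤ) + m.2)‖ ^ 2) (Finset.mem_univ n)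
  have hBsup0 : ∀ ℓ, 0 ≤ Bsup ℓ := fun ℓ =>
    le_trans (by positivity) (hBsup_le ℓ (⟨0, hd⟩, ⟨0, hd⟩))
  have hf0 : ∀ ℓ, 0 ≤ f ℓ := fun ℓ => by
    have := hBsup0 ℓ
    have h2 : (0:ℝ) ≤ ((lam ℓ) ^ 2)⁻¹ * specNorm (Fmat d L lam lam1 ℓ) ^ 2 := by positivity
    exact mul_nonneg h2 this
  have hfC : ∀ ℓ, f ℓ ≤ C := fun ℓ => Finset.le_sup' f (Finset.mem_univ ℓ)
  have hC0 : 0 ≤ C := le_trans (hf0 ⟨0, hL⟩) (hfC ⟨0, hL⟩)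
  -- Hermitian
  have hQherm : ∀ m k, (Qx d L lam lam1 x m k).IsHermitian := by
    intro m k
    ext p q
    simp only [Matrix.conjTranspose_apply, Qx, Matrix.of_apply]
    by_cases h : p.1 = q.1
    · rw [if_pos h.symm, if_pos h, h, RCLike.star_def]
      simp only [_root_.map_mul, map_inv₀, _root_.map_pow, Complex.conj_ofReal,
        Complex.conj_conj]
      ring
    · rw [if_neg (fun hh => h hh.symm), if_neg h, star_zero]
  have hSherm : S.IsHermitian := by
    rw [hS]
    unfold Matrix.IsHermitian
    rw [Matrix.conjTranspose_sum]
    refine Finset.sum_congr rfl fun m _ => ?_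
    rw [Matrix.conjTranspose_sum]
    exact Finset.sum_congr rfl fun k _ => hQherm m k
  have hsa : IsSelfAdjoint (Matrix.toEuclideanCLM (𝕜 := ℂ) S) := by
    have hstar : star S = S := hSherm
    show star (Matrix.toEuclideanCLM (𝕜 := ℂ) S) = Matrix.toEuclideanCLM (𝕜 := ℂ) S
    rw [← map_star, hstar]
  -- quadratic form value
  have hquad : ∀ z : EuclideanSpace ℂ (Fin L × (Fin d × Fin d)),
      (inner ℂ (Matrix.toEuclideanCLM (𝕜 := ℂ) S z) z : ℂ)
        = ((∑ m ∈ M, ∑ k : Fin d × Fin d, ∑ ℓ : Fin L,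
            ((lam ℓ) ^ 2)⁻¹ * Complex.normSq (cval d L lam lam1 x (fun q => z q) ℓ m k) : ℝ) : ℂ) := by
    intro z
    rw [_root_.inner_toEuclideanCLM]
    have h1 : ∀ p, S.mulVec (fun q => z q) p
        = ∑ m ∈ M, ∑ k : Fin d × Fin d, (Qx d L lam lam1 x m k).mulVec (fun q => z q) p := by
      intro p
      simp only [Matrix.mulVec, dotProduct, hS, Matrix.sum_apply, Finset.sum_mul]
      rw [Finset.sum_comm]
      exact Finset.sum_congr rfl fun m _ => Finset.sum_comm
    calc ∑ p, conj (S.mulVec (fun q => z q) p) * z p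
        = ∑ p, ∑ m ∈ M, ∑ k : Fin d × Fin d,
            conj ((Qx d L lam lam1 x m k).mulVec (fun q => z q) p) * z p := by
          refine Finset.sum_congr rfl fun p _ => ?_
          rw [h1 p, map_sum, Finset.sum_mul]
          refine Finset.sum_congr rfl fun m _ => ?_
          rw [map_sum, Finset.sum_mul]
      _ = ∑ m ∈ M, ∑ k : Fin d × Fin d, ∑ p,
            conj ((Qx d L lam lam1 x m k).mulVec (fun q => z q) p) * z p := by
          rw [Finset.sum_comm]
          exact Finset.sum_congr rfl fun m _ => Finset.sum_comm
      _ = ∑ m ∈ M, ∑ k : Fin d × Fin d, ∑ ℓ : Fin L,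
            ((lam ℓ : ℂ) ^ 2)⁻¹ *
              (Complex.normSq (cval d L lam lam1 x (fun q => z q) ℓ m k) : ℂ) := by
          refine Finset.sum_congr rfl fun m _ => Finset.sum_congr rfl fun k _ => ?_
          rw [quadQ]
          rfl
      _ = _ := by norm_cast
  have hpos : ∀ z : EuclideanSpace ℂ (Fin L × (Fin d × Fin d)),
      0 ≤ Complex.re (⟪Matrix.toEuclideanCLM (𝕜 := ℂ) S z, z⟫_ℂ) := by
    intro z
    rw [hquad z, Complex.ofReal_re]
    refine Finset.sum_nonneg fun m _ => Finset.sum_nonneg fun k _ =>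
      Finset.sum_nonneg fun ℓ _ => mul_nonneg (by positivity) (Complex.normSq_nonneg _)
  have hbound : ∀ z : EuclideanSpace ℂ (Fin L × (Fin d × Fin d)),
      Complex.re (⟪Matrix.toEuclideanCLM (𝕜 := ℂ) S z, z⟫_ℂ) ≤ C * ‖z‖ ^ 2 := by
    intro z
    rw [hquad z, Complex.ofReal_re]
    have hz2 : ‖z‖ ^ 2 = ∑ ℓ : Fin L, ∑ n : Fin d × Fin d, ‖z (ℓ, n)‖ ^ 2 := by
      rw [PiLp.norm_sq_eq_of_L2, Fintype.sum_prod_type]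
    have hswap : (∑ m ∈ M, ∑ k : Fin d × Fin d, ∑ ℓ : Fin L,
          ((lam ℓ) ^ 2)⁻¹ * Complex.normSq (cval d L lam lam1 x (fun q => z q) ℓ m k))
        = ∑ ℓ : Fin L, ((lam ℓ) ^ 2)⁻¹ * ∑ m ∈ M, ∑ k : Fin d × Fin d,
            Complex.normSq (cval d L lam lam1 x (fun q => z q) ℓ m k) := by
      calc (∑ m ∈ M, ∑ k : Fin d × Fin d, ∑ ℓ : Fin L,
            ((lam ℓ) ^ 2)⁻¹ * Complex.normSq (cval d L lam lam1 x (fun q => z q) ℓ m k))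
          = ∑ m ∈ M, ∑ ℓ : Fin L, ∑ k : Fin d × Fin d,
            ((lam ℓ) ^ 2)⁻¹ * Complex.normSq (cval d L lam lam1 x (fun q => z q) ℓ m k) :=
            Finset.sum_congr rfl fun m _ => Finset.sum_comm
        _ = ∑ ℓ : Fin L, ∑ m ∈ M, ∑ k : Fin d × Fin d,
            ((lam ℓ) ^ 2)⁻¹ * Complex.normSq (cval d L lam lam1 x (fun q => z q) ℓ m k) :=
            Finset.sum_comm
        _ = _ := by simp_rw [Finset.mul_sum]
    rw [hswap]
    have hper : ∀ ℓ, (∑ m ∈ M, ∑ k : Fin d × Fin d,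
          Complex.normSq (cval d L lam lam1 x (fun q => z q) ℓ m k))
        ≤ specNorm (Fmat d L lam lam1 ℓ) ^ 2 *
            (Bsup ℓ * ∑ n : Fin d × Fin d, ‖z (ℓ, n)‖ ^ 2) := by
      intro ℓ
      have hm : ∀ m, (∑ k : Fin d × Fin d,
            Complex.normSq (cval d L lam lam1 x (fun q => z q) ℓ m k))
          ≤ specNorm (Fmat d L lam lam1 ℓ) ^ 2 *
              ∑ n : Fin d × Fin d,
                ‖extz d (x ℓ) ((n.1 : ℤ) + m.1, (n.2 : ℤ) + m.2)‖ ^ 2 * ‖z (ℓ, n)‖ ^ 2 := by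
        intro m
        have he : ∀ k, Complex.normSq (cval d L lam lam1 x (fun q => z q) ℓ m k)
            = ‖(Fmat d L lam lam1 ℓ).mulVec
                (fun n => extz d (x ℓ) ((n.1 : ℤ) + m.1, (n.2 : ℤ) + m.2) * z (ℓ, n)) k‖ ^ 2 := by
          intro k
          rw [cval_eq_conj_mulVec, Complex.normSq_conj, Complex.normSq_eq_norm_sq]
        calc (∑ k : Fin d × Fin d,
              Complex.normSq (cval d L lam lam1 x (fun q => z q) ℓ m k))
            = ∑ k : Fin d × Fin d, ‖(Fmat d L lam lam1 ℓ).mulVec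
                (fun n => extz d (x ℓ) ((n.1 : ℤ) + m.1, (n.2 : ℤ) + m.2) * z (ℓ, n)) k‖ ^ 2 :=
              Finset.sum_congr rfl fun k _ => he k
          _ ≤ specNorm (Fmat d L lam lam1 ℓ) ^ 2 * ∑ n : Fin d × Fin d,
                ‖extz d (x ℓ) ((n.1 : ℤ) + m.1, (n.2 : ℤ) + m.2) * z (ℓ, n)‖ ^ 2 :=
              mulVec_sq_sum_le _ _
          _ = specNorm (Fmat d L lam lam1 ℓ) ^ 2 * ∑ n : Fin d × Fin d,
                ‖extz d (x ℓ) ((n.1 : ℤ) + m.1, (n.2 : ℤ) + m.2)‖ ^ 2 * ‖z (ℓ, n)‖ ^ 2 := by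
              refine congrArg _ (Finset.sum_congr rfl fun n _ => ?_)
              rw [norm_mul, mul_pow]
      calc (∑ m ∈ M, ∑ k : Fin d × Fin d,
            Complex.normSq (cval d L lam lam1 x (fun q => z q) ℓ m k))
          ≤ ∑ m ∈ M, specNorm (Fmat d L lam lam1 ℓ) ^ 2 *
              ∑ n : Fin d × Fin d,
                ‖extz d (x ℓ) ((n.1 : ℤ) + m.1, (n.2 : ℤ) + m.2)‖ ^ 2 * ‖z (ℓ, n)‖ ^ 2 :=
            Finset.sum_le_sum fun m _ => hm m
        _ = specNorm (Fmat d L lam lam1 ℓ) ^ 2 * ∑ n : Fin d × Fin d,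
              (∑ m ∈ M, ‖extz d (x ℓ) ((n.1 : ℤ) + m.1, (n.2 : ℤ) + m.2)‖ ^ 2) * ‖z (ℓ, n)‖ ^ 2 := by
            rw [← Finset.mul_sum]
            congr 1
            rw [Finset.sum_comm]
            exact Finset.sum_congr rfl fun n _ => (Finset.sum_mul _ _ _).symm
        _ ≤ specNorm (Fmat d L lam lam1 ℓ) ^ 2 * ∑ n : Fin d × Fin d,
              Bsup ℓ * ‖z (ℓ, n)‖ ^ 2 := by
            refine mul_le_mul_of_nonneg_left (Finset.sum_le_sum fun n _ => ?_) (by positivity)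
            exact mul_le_mul_of_nonneg_right (hBsup_le ℓ n) (by positivity)
        _ = specNorm (Fmat d L lam lam1 ℓ) ^ 2 *
              (Bsup ℓ * ∑ n : Fin d × Fin d, ‖z (ℓ, n)‖ ^ 2) := by
            rw [← Finset.mul_sum]
    calc (∑ ℓ : Fin L, ((lam ℓ) ^ 2)⁻¹ * ∑ m ∈ M, ∑ k : Fin d × Fin d,
            Complex.normSq (cval d L lam lam1 x (fun q => z q) ℓ m k))
        ≤ ∑ ℓ : Fin L, ((lam ℓ) ^ 2)⁻¹ * (specNorm (Fmat d L lam lam1 ℓ) ^ 2 *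
            (Bsup ℓ * ∑ n : Fin d × Fin d, ‖z (ℓ, n)‖ ^ 2)) := by
          refine Finset.sum_le_sum fun ℓ _ => mul_le_mul_of_nonneg_left (hper ℓ) ?_
          positivity
      _ = ∑ ℓ : Fin L, f ℓ * ∑ n : Fin d × Fin d, ‖z (ℓ, n)‖ ^ 2 := by
          refine Finset.sum_congr rfl fun ℓ _ => ?_
          simp only [hf]
          ring
      _ ≤ ∑ ℓ : Fin L, C * ∑ n : Fin d × Fin d, ‖z (ℓ, n)‖ ^ 2 := by
          refine Finset.sum_le_sum fun ℓ _ => mul_le_mul_of_nonneg_right (hfC ℓ) ?_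
          positivity
      _ = C * ∑ ℓ : Fin L, ∑ n : Fin d × Fin d, ‖z (ℓ, n)‖ ^ 2 := by
          rw [Finset.mul_sum]
      _ = C * ‖z‖ ^ 2 := by rw [hz2]
  calc specNorm S = ‖Matrix.toEuclideanCLM (𝕜 := ℂ) S‖ := rfl
    _ ≤ C := opNorm_le_of_quadratic _ hsa hC0 hpos hbound
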